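/- Let G be a group with a finite symmetric generating set S. Let v be an action of G on a standard probability space (X,μ) and W a set of actions of G on (X,μ). Suppose that for every ε > 0 and every finite Borel partition {P₁,…,Pₙ} of X there exist w ∈ W and a finite Borel partition {Q₁,…,Qₙ} of X such that |μ(P_i ∩ v_s P_j) − μ(Q_i ∩ w_s Q_j)| < ε for all s ∈ S and 1 ≤ i,j ≤ n. Then v belongs to the closure of W in the weak topology on A(G,X,μ); equivalently, for every ε > 0, every finite partition {P₁,…,Pₙ}, and every finite F ⊂ G, there exist w ∈ W and a partition {Q₁,…,Qₙ} with |μ(P_i ∩ v_g P_j) − μ(Q_i ∩ w_g Q_j)| < ε for all g ∈ F. -/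

import Mathlib

/-!
Call `v` approximable by `W` on `D ⊆ G` when the closure condition holds for the elements of `D`.
If `v` is approximable on a set `D ⊇ S`, it is approximable on `S⁻¹ D`. To approximate at
`t⁻¹ h`, refine `P` by its translates `v t '' P`, approximate the refinement `R` on `D` by a
partition `T`, and coarsen `T` back to `Q`. Now `v t '' P i` is a union of `R`-blocks, and since
the masses and the `t`-transition matrices of `R` and `T` are close, `w t '' Q i` is the same
union of `T`-blocks up to a set of small measure. Hence
`μ (P i ∩ v (t⁻¹ h) '' P j) = μ (v t '' P i ∩ v h '' P j)` is close to the corresponding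
quantity for `Q` and `w`. As `S` is symmetric and generates `G`, the powers of `insert 1 S`
exhaust `G`, so every finite `F` is reached.
-/

open MeasureTheory Set Function
open scoped Pointwise symmDiff

section Partition

variable {X ι κ : Type*} [MeasurableSpace X]

structure IsMeasurablePartition (P : ι → Set X) : Prop where
  measurableSet : ∀ i, MeasurableSet (P i)
  pairwise_disjoint : Pairwise (Disjoint on P)
  iUnion_eq_univ : ⋃ i, P i = univ

namespace IsMeasurablePartition

variable {P : ι → Set X}

lemma comp_equiv (hP : IsMeasurablePartition P) (e : κ ≃ ι) : IsMeasurablePartition (P ∘ e) where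
  measurableSet i := hP.measurableSet (e i)
  pairwise_disjoint _ _ hij := hP.pairwise_disjoint (e.injective.ne hij)
  iUnion_eq_univ := (e.surjective.iUnion_comp P).trans hP.iUnion_eq_univ

lemma exists_mem (hP : IsMeasurablePartition P) (x : X) : ∃ i, x ∈ P i :=
  mem_iUnion.mp (hP.iUnion_eq_univ ▸ mem_univ x)

lemma iInter [Countable κ] {P : κ → ι → Set X} (hP : ∀ k, IsMeasurablePartition (P k)) :
    IsMeasurablePartition fun f : κ → ι => ⋂ k, P k (f k) where
  measurableSet f := .iInter fun k => (hP k).measurableSet (f k)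
  pairwise_disjoint f f' hff' := by
    obtain ⟨k, hk⟩ := Function.ne_iff.mp hff'
    exact ((hP k).pairwise_disjoint hk).mono (iInter_subset _ k) (iInter_subset _ k)
  iUnion_eq_univ := by
    refine eq_univ_of_forall fun x => mem_iUnion.mpr ?_
    choose f hf using fun k => (hP k).exists_mem x
    exact ⟨f, mem_iInter.mpr hf⟩

lemma eq_biUnion_of_subset [Fintype κ] [DecidableEq ι] (hP : IsMeasurablePartition P)
    {R : κ → Set X} (hR : IsMeasurablePartition R) {c : κ → ι} (hc : ∀ k, R k ⊆ P (c k)) (i : ι) :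
    P i = ⋃ k ∈ Finset.univ.filter (c · = i), R k := by
  refine Subset.antisymm (fun x hx => ?_) (iUnion₂_subset fun k hk => ?_)
  · obtain ⟨k, hk⟩ := hR.exists_mem x
    have hck : c k = i := by
      by_contra hne
      exact (hP.pairwise_disjoint hne).ne_of_mem (hc k hk) hx rfl
    exact mem_biUnion (by simpa using hck) hk
  · rw [← ((Finset.mem_filter_univ k).mp hk)]
    exact hc k

lemma biUnion_fiber [Fintype κ] [DecidableEq ι] {R : κ → Set X} (hR : IsMeasurablePartition R)
    (c : κ → ι) : IsMeasurablePartition fun i => ⋃ k ∈ Finset.univ.filter (c · = i), R k where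
  measurableSet i := .biUnion (Finset.countable_toSet _) fun k _ => hR.measurableSet k
  pairwise_disjoint i i' hii' := by
    refine disjoint_iUnion₂_left.mpr fun k hk => disjoint_iUnion₂_right.mpr fun k' hk' => ?_
    refine hR.pairwise_disjoint fun hkk' => hii' ?_
    rw [← (Finset.mem_filter_univ k).mp hk, ← (Finset.mem_filter_univ k').mp hk', hkk']
  iUnion_eq_univ := by
    refine eq_univ_of_forall fun x => mem_iUnion.mpr ?_
    obtain ⟨k, hk⟩ := hR.exists_mem x
    exact ⟨c k, mem_biUnion (by simp) hk⟩

end IsMeasurablePartition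

end Partition

lemma image_eq_preimage_inv {G X : Type*} [Group G] (v : G →* Equiv.Perm X) (g : G) (A : Set X) :
    v g '' A = v g⁻¹ ⁻¹' A := by
  rw [Equiv.image_eq_preimage_symm, map_inv, Equiv.Perm.inv_def]

section Action

variable {G X ι : Type*} [Group G] [MeasurableSpace X] {μ : Measure X} {v : G →* Equiv.Perm X}

lemma measurableSet_image (hv : ∀ g, Measurable (v g)) (g : G) {A : Set X}
    (hA : MeasurableSet A) : MeasurableSet (v g '' A) := by
  rw [image_eq_preimage_inv]
  exact hv g⁻¹ hA

lemma IsMeasurablePartition.image {P : ι → Set X} (hP : IsMeasurablePartition P)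
    (hv : ∀ g, Measurable (v g)) (g : G) : IsMeasurablePartition fun i => v g '' P i where
  measurableSet i := measurableSet_image hv g (hP.measurableSet i)
  pairwise_disjoint _ _ hij := (disjoint_image_iff (v g).injective).mpr (hP.pairwise_disjoint hij)
  iUnion_eq_univ := by
    rw [← image_iUnion, hP.iUnion_eq_univ, image_univ_of_surjective (v g).surjective]

lemma measureReal_image (hv : ∀ g, MeasurePreserving (v g) μ μ) (g : G) {A : Set X}
    (hA : MeasurableSet A) : μ.real (v g '' A) = μ.real A := by
  rw [image_eq_preimage_inv, measureReal_def, measureReal_def,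
    (hv g⁻¹).measure_preimage hA.nullMeasurableSet]

lemma measureReal_inter_image_inv_mul (hv : ∀ g, MeasurePreserving (v g) μ μ) (t h : G)
    {A B : Set X} (hA : MeasurableSet A) (hB : MeasurableSet B) :
    μ.real (A ∩ v (t⁻¹ * h) '' B) = μ.real (v t '' A ∩ v h '' B) := by
  have hmeas := fun g => (hv g).measurable
  have htranslate : v t '' (v (t⁻¹ * h) '' B) = v h '' B := by
    rw [image_image]
    simp_rw [← Equiv.Perm.mul_apply, ← map_mul, mul_inv_cancel_left]
  rw [← measureReal_image hv t (hA.inter (measurableSet_image hmeas _ hB)),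
    image_inter (v t).injective, htranslate]

end Action

section Blocks

variable {X ι κ : Type*} [MeasurableSpace X] {μ : Measure X} [IsFiniteMeasure μ]

lemma measureReal_biUnion_inter_biUnion {A : ι → Set X} {B : κ → Set X}
    (hA : ∀ i, MeasurableSet (A i)) (hAd : Pairwise (Disjoint on A))
    (hB : ∀ j, MeasurableSet (B j)) (hBd : Pairwise (Disjoint on B)) (I : Finset ι) (J : Finset κ) :
    μ.real ((⋃ i ∈ I, A i) ∩ ⋃ j ∈ J, B j) = ∑ i ∈ I, ∑ j ∈ J, μ.real (A i ∩ B j) := by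
  rw [iUnion₂_inter, measureReal_biUnion_finset
    (fun i _ i' _ hii' => (hAd hii').mono inter_subset_left inter_subset_left)
    (fun i _ => (hA i).inter (Finset.measurableSet_biUnion J fun j _ => hB j))]
  refine Finset.sum_congr rfl fun i _ => ?_
  rw [inter_iUnion₂, measureReal_biUnion_finset
    (fun j _ j' _ hjj' => (hBd hjj').mono inter_subset_right inter_subset_right)
    (fun j _ => (hA i).inter (hB j))]

lemma abs_measureReal_inter_sub_le {A B C : Set X} (hA : MeasurableSet A) (hB : MeasurableSet B)
    (hC : MeasurableSet C) :
    |μ.real (A ∩ C) - μ.real (B ∩ C)| ≤ μ.real (A \ B) + μ.real (B \ A) := by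
  calc |μ.real (A ∩ C) - μ.real (B ∩ C)| ≤ μ.real ((A ∩ C) ∆ (B ∩ C)) :=
        abs_measureReal_sub_le_measureReal_symmDiff (hA.inter hC).nullMeasurableSet
          (hB.inter hC).nullMeasurableSet
    _ ≤ μ.real (A ∆ B) := by
        rw [← inter_symmDiff_distrib_right]
        exact measureReal_mono inter_subset_left
    _ = μ.real (A \ B) + μ.real (B \ A) := measureReal_symmDiff_eq hA hB

end Blocks

lemma Finset.abs_sum_sum_sub_sum_sum_le {ι κ : Type*} [Fintype ι] [Fintype κ] {f g : ι → κ → ℝ}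
    {δ : ℝ} (h : ∀ i j, |f i j - g i j| ≤ δ) (I : Finset ι) (J : Finset κ) :
    |∑ i ∈ I, ∑ j ∈ J, f i j - ∑ i ∈ I, ∑ j ∈ J, g i j|
      ≤ Fintype.card ι * Fintype.card κ * δ := by
  calc |∑ i ∈ I, ∑ j ∈ J, f i j - ∑ i ∈ I, ∑ j ∈ J, g i j|
      ≤ ∑ i ∈ I, ∑ j ∈ J, |f i j - g i j| := by
        simp only [← Finset.sum_sub_distrib]
        exact (Finset.abs_sum_le_sum_abs _ _).trans
          (Finset.sum_le_sum fun i _ => Finset.abs_sum_le_sum_abs _ _)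
    _ ≤ ∑ i ∈ I, ∑ j, |f i j - g i j| := Finset.sum_le_sum fun i _ =>
        Finset.sum_le_sum_of_subset_of_nonneg J.subset_univ fun _ _ _ => abs_nonneg _
    _ ≤ ∑ i, ∑ j, |f i j - g i j| := Finset.sum_le_sum_of_subset_of_nonneg I.subset_univ
        fun _ _ _ => Finset.sum_nonneg fun _ _ => abs_nonneg _
    _ ≤ ∑ _i : ι, ∑ _j : κ, δ := Finset.sum_le_sum fun i _ => Finset.sum_le_sum fun j _ => h i j
    _ = Fintype.card ι * Fintype.card κ * δ := by simp [mul_assoc]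

section Transition

variable {G X ι : Type*} [Group G] [MeasurableSpace X] [Fintype ι] {μ : Measure X}
  [IsFiniteMeasure μ] {v w : G →* Equiv.Perm X} {R T : ι → Set X} {δ : ℝ}

lemma abs_measureReal_biUnion_inter_image_sub_le (hR : IsMeasurablePartition R)
    (hT : IsMeasurablePartition T) (hv : ∀ g, Measurable (v g)) (hw : ∀ g, Measurable (w g))
    {g : G} (hclose : ∀ i j, |μ.real (R i ∩ v g '' R j) - μ.real (T i ∩ w g '' T j)| ≤ δ)
    (I J : Finset ι) :
    |μ.real ((⋃ i ∈ I, R i) ∩ v g '' ⋃ j ∈ J, R j)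
        - μ.real ((⋃ i ∈ I, T i) ∩ w g '' ⋃ j ∈ J, T j)|
      ≤ Fintype.card ι * Fintype.card ι * δ := by
  have hRg := hR.image hv g
  have hTg := hT.image hw g
  rw [image_iUnion₂, image_iUnion₂,
    measureReal_biUnion_inter_biUnion hR.measurableSet hR.pairwise_disjoint hRg.measurableSet
      hRg.pairwise_disjoint,
    measureReal_biUnion_inter_biUnion hT.measurableSet hT.pairwise_disjoint hTg.measurableSet
      hTg.pairwise_disjoint]
  exact Finset.abs_sum_sum_sub_sum_sum_le hclose I J

lemma abs_measureReal_biUnion_sub_le (hR : IsMeasurablePartition R)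
    (hT : IsMeasurablePartition T) (hv : ∀ g, Measurable (v g)) (hw : ∀ g, Measurable (w g))
    {g : G} (hclose : ∀ i j, |μ.real (R i ∩ v g '' R j) - μ.real (T i ∩ w g '' T j)| ≤ δ)
    (I : Finset ι) :
    |μ.real (⋃ i ∈ I, R i) - μ.real (⋃ i ∈ I, T i)| ≤ Fintype.card ι * Fintype.card ι * δ := by
  have hfull : ∀ {P : ι → Set X}, IsMeasurablePartition P → ∀ e : Equiv.Perm X,
      (⋃ i ∈ I, P i) ∩ e '' ⋃ j ∈ Finset.univ, P j = ⋃ i ∈ I, P i := fun hP e => by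
    simp [hP.iUnion_eq_univ, image_univ_of_surjective e.surjective]
  simpa only [hfull hR, hfull hT] using
    abs_measureReal_biUnion_inter_image_sub_le hR hT hv hw hclose I Finset.univ

lemma abs_measureReal_biUnion_inter_image_inv_mul_sub_le (hR : IsMeasurablePartition R)
    (hT : IsMeasurablePartition T) (hv : ∀ g, MeasurePreserving (v g) μ μ)
    (hw : ∀ g, MeasurePreserving (w g) μ μ) {t h : G}
    (ht : ∀ i j, |μ.real (R i ∩ v t '' R j) - μ.real (T i ∩ w t '' T j)| ≤ δ)
    (hh : ∀ i j, |μ.real (R i ∩ v h '' R j) - μ.real (T i ∩ w h '' T j)| ≤ δ)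
    {I J K : Finset ι} (hIK : v t '' ⋃ k ∈ K, R k = ⋃ i ∈ I, R i) :
    |μ.real ((⋃ k ∈ K, R k) ∩ v (t⁻¹ * h) '' ⋃ j ∈ J, R j)
        - μ.real ((⋃ k ∈ K, T k) ∩ w (t⁻¹ * h) '' ⋃ j ∈ J, T j)|
      ≤ 5 * (Fintype.card ι * Fintype.card ι * δ) := by
  have hvm g := (hv g).measurable
  have hwm g := (hw g).measurable
  have hblock {P : ι → Set X} (hP : IsMeasurablePartition P) (L : Finset ι) :
      MeasurableSet (⋃ i ∈ L, P i) :=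
    Finset.measurableSet_biUnion L fun i _ => hP.measurableSet i
  have hB : MeasurableSet (w t '' ⋃ k ∈ K, T k) := measurableSet_image hwm t (hblock hT K)
  have hR_shift := measureReal_inter_image_inv_mul hv t h (hblock hR K) (hblock hR J)
  have hT_shift := measureReal_inter_image_inv_mul hw t h (hblock hT K) (hblock hT J)
  rw [hIK] at hR_shift
  rw [hR_shift, hT_shift]
  have hRK := measureReal_image hv t (hblock hR K)
  have hTK := measureReal_image hw t (hblock hT K)
  rw [hIK] at hRK
  have hRI : μ.real ((⋃ i ∈ I, R i) ∩ v t '' ⋃ k ∈ K, R k) = μ.real (⋃ i ∈ I, R i) := by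
    rw [hIK, inter_self]
  have hclose_h := abs_measureReal_biUnion_inter_image_sub_le hR hT hvm hwm hh I J
  have hclose_t := abs_measureReal_biUnion_inter_image_sub_le hR hT hvm hwm ht I K
  rw [hRI] at hclose_t
  have hmass_I := abs_measureReal_biUnion_sub_le hR hT hvm hwm ht I
  have hmass_K := abs_measureReal_biUnion_sub_le hR hT hvm hwm ht K
  -- `w t` need not map the `T`-block over `K` onto the one over `I`, but their symmetric
  -- difference is small: its measure is determined by the two masses and the overlap, and these
  -- are close to the corresponding quantities for `R`, where the two blocks coincide.
  have hswap := abs_measureReal_inter_sub_le (μ := μ) (hblock hT I) hB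
    (measurableSet_image hwm h (hblock hT J))
  have hsplit_I := measureReal_inter_add_sdiff (μ := μ) (s := ⋃ i ∈ I, T i) hB
    (measure_ne_top μ _)
  have hsplit_B := measureReal_inter_add_sdiff (μ := μ) (s := w t '' ⋃ k ∈ K, T k)
    (hblock hT I) (measure_ne_top μ _)
  rw [inter_comm] at hsplit_B
  rw [abs_le] at hclose_h hclose_t hmass_I hmass_K hswap ⊢
  constructor <;> linarith [hclose_h.1, hclose_h.2, hclose_t.1, hclose_t.2, hmass_I.1,
    hmass_I.2, hmass_K.1, hmass_K.2, hswap.1, hswap.2]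

end Transition

lemma mul_div_add_one_lt {a ε : ℝ} (ha : 0 ≤ a) (hε : 0 < ε) : a * (ε / (a + 1)) < ε := by
  rw [mul_div_assoc', div_lt_iff₀ (by positivity)]
  nlinarith

section Approximation

variable {G X : Type*} [Group G] [MeasurableSpace X] {μ : Measure X}
  {v : G →* Equiv.Perm X} {W : Set (G →* Equiv.Perm X)} {D : Set G}

def ApproximableOn (μ : Measure X) (v : G →* Equiv.Perm X) (W : Set (G →* Equiv.Perm X))
    (D : Set G) : Prop :=
  ∀ ε > (0 : ℝ), ∀ (n : ℕ) (P : Fin n → Set X), IsMeasurablePartition P →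
    ∃ w ∈ W, ∃ Q : Fin n → Set X, IsMeasurablePartition Q ∧
      ∀ g ∈ D, ∀ i j, |μ.real (P i ∩ v g '' P j) - μ.real (Q i ∩ w g '' Q j)| < ε

namespace ApproximableOn

lemma exists_of_fintype (hD : ApproximableOn μ v W D) {ι : Type*} [Fintype ι] {ε : ℝ}
    (hε : 0 < ε) {P : ι → Set X} (hP : IsMeasurablePartition P) :
    ∃ w ∈ W, ∃ Q : ι → Set X, IsMeasurablePartition Q ∧
      ∀ g ∈ D, ∀ i j, |μ.real (P i ∩ v g '' P j) - μ.real (Q i ∩ w g '' Q j)| < ε := by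
  let e := Fintype.equivFin ι
  obtain ⟨w, hw, Q, hQ, hclose⟩ := hD ε hε _ (P ∘ e.symm) (hP.comp_equiv e.symm)
  refine ⟨w, hw, Q ∘ e, hQ.comp_equiv e, fun g hg i j => ?_⟩
  simpa using hclose g hg (e i) (e j)

lemma insert_one [IsFiniteMeasure μ] (hv : ∀ g, Measurable (v g))
    (hW : ∀ w ∈ W, ∀ g, Measurable (w g)) (hD : ApproximableOn μ v W D) :
    ApproximableOn μ v W (insert 1 D) := by
  intro ε hε n P hP
  rcases D.eq_empty_or_nonempty with rfl | ⟨d, hd⟩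
  · obtain ⟨w, hw, -⟩ := hD ε hε n P hP
    refine ⟨w, hw, P, hP, ?_⟩
    rw [insert_empty_eq]
    rintro g rfl i j
    simpa using hε
  obtain ⟨w, hw, Q, hQ, hclose⟩ := hD (ε / (n * n + 1)) (by positivity) n P hP
  refine ⟨w, hw, Q, hQ, ?_⟩
  rintro g (rfl | hg) i j
  · simp only [map_one, Equiv.Perm.coe_one, image_id]
    obtain rfl | hij := eq_or_ne i j
    · have hmass := abs_measureReal_biUnion_sub_le hP hQ hv (hW w hw)
        (fun i j => (hclose d hd i j).le) {i}
      simp only [Finset.set_biUnion_singleton, Fintype.card_fin] at hmass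
      rw [inter_self, inter_self]
      exact hmass.trans_lt (mul_div_add_one_lt (by positivity) hε)
    · rw [(hP.pairwise_disjoint hij).inter_eq, (hQ.pairwise_disjoint hij).inter_eq]
      simpa using hε
  · exact (hclose g hg i j).trans_le (div_le_self hε.le (by nlinarith))

lemma inv_mul [IsFiniteMeasure μ] (hv : ∀ g, MeasurePreserving (v g) μ μ)
    (hW : ∀ w ∈ W, ∀ g, MeasurePreserving (w g) μ μ) (hD : ApproximableOn μ v W D)
    {S : Finset G} (hSD : (S : Set G) ⊆ D) : ApproximableOn μ v W ((S : Set G)⁻¹ * D) := by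
  classical
  intro ε hε n P hP
  have hvm g := (hv g).measurable
  let R : (↥(insert 1 S) → Fin n) → Set X := fun f => ⋂ t : ↥(insert 1 S), v t '' P (f t)
  have hR : IsMeasurablePartition R :=
    IsMeasurablePartition.iInter (P := fun (t : ↥(insert 1 S)) k => v t '' P k)
      fun t => hP.image hvm t
  have hPR (t : ↥(insert 1 S)) (k : Fin n) : v t '' P k = ⋃ f ∈ Finset.univ.filter (· t = k), R f :=
    (hP.image hvm t).eq_biUnion_of_subset hR (fun f => iInter_subset _ t) k
  let one : ↥(insert 1 S) := ⟨1, Finset.mem_insert_self 1 S⟩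
  have hP_one (k : Fin n) : P k = ⋃ f ∈ Finset.univ.filter (· one = k), R f := by
    simpa [one] using hPR one k
  set N := Fintype.card (↥(insert 1 S) → Fin n)
  obtain ⟨w, hw, T, hT, hclose⟩ :=
    hD.exists_of_fintype (ε := ε / (5 * (N * N) + 1)) (by positivity) hR
  refine ⟨w, hw, _, hT.biUnion_fiber (· one), ?_⟩
  rintro _ ⟨s, hs, h, hh, rfl⟩ i j
  let t : ↥(insert 1 S) := ⟨s⁻¹, Finset.mem_insert_of_mem hs⟩
  have hbound := abs_measureReal_biUnion_inter_image_inv_mul_sub_le hR hT hv (hW w hw) (t := t)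
    (fun i j => (hclose _ (hSD hs) i j).le) (fun i j => (hclose h hh i j).le)
    (I := Finset.univ.filter (· t = i)) (J := Finset.univ.filter (· one = j))
    (K := Finset.univ.filter (· one = i)) (by rw [← hP_one i, hPR t i])
  rw [hP_one i, hP_one j]
  simp only [t, inv_inv] at hbound
  rw [← mul_assoc] at hbound
  exact hbound.trans_lt (mul_div_add_one_lt (by positivity) hε)

end ApproximableOn

end Approximation

lemma exists_mem_insert_one_pow_of_mem_closure {G : Type*} [Group G] {S : Set G}
    (hS : ∀ s ∈ S, s⁻¹ ∈ S) {g : G} (hg : g ∈ Subgroup.closure S) :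
    ∃ L : ℕ, g ∈ insert 1 S ^ L := by
  induction hg using Subgroup.closure_induction_left with
  | one => exact ⟨0, by simp⟩
  | mul_left s hs _ _ ih =>
    obtain ⟨L, hL⟩ := ih
    exact ⟨L + 1, by rw [pow_succ']; exact mul_mem_mul (mem_insert_of_mem 1 hs) hL⟩
  | inv_mul_cancel s hs _ _ ih =>
    obtain ⟨L, hL⟩ := ih
    exact ⟨L + 1, by rw [pow_succ']; exact mul_mem_mul (mem_insert_of_mem 1 (hS s hs)) hL⟩

open MeasureTheory in
theorem stmt12 {G X : Type*} [Group G] [MeasurableSpace X]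
    (μ : Measure X) [IsProbabilityMeasure μ]
    (S : Finset G) (hSsym : ∀ s ∈ S, s⁻¹ ∈ S)
    (hSgen : Subgroup.closure (S : Set G) = ⊤)
    (v : G →* Equiv.Perm X) (hv : ∀ g, MeasurePreserving (v g) μ μ)
    (W : Set (G →* Equiv.Perm X)) (hW : ∀ w ∈ W, ∀ g, MeasurePreserving (w g) μ μ)
    (hyp : ∀ ε > (0 : ℝ), ∀ (n : ℕ) (P : Fin n → Set X),
      (∀ i, MeasurableSet (P i)) → Pairwise (Function.onFun Disjoint P) →
      (⋃ i, P i) = Set.univ →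
      ∃ w ∈ W, ∃ Q : Fin n → Set X,
        (∀ i, MeasurableSet (Q i)) ∧ Pairwise (Function.onFun Disjoint Q) ∧
        (⋃ i, Q i) = Set.univ ∧
        ∀ s ∈ S, ∀ i j,
          |(μ (P i ∩ (v s) '' P j)).toReal - (μ (Q i ∩ (w s) '' Q j)).toReal| < ε) :
    ∀ ε > (0 : ℝ), ∀ (n : ℕ) (P : Fin n → Set X),
      (∀ i, MeasurableSet (P i)) → Pairwise (Function.onFun Disjoint P) →
      (⋃ i, P i) = Set.univ →
      ∀ F : Finset G,
      ∃ w ∈ W, ∃ Q : Fin n → Set X,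
        (∀ i, MeasurableSet (Q i)) ∧ Pairwise (Function.onFun Disjoint Q) ∧
        (⋃ i, Q i) = Set.univ ∧
        ∀ g ∈ F, ∀ i j,
          |(μ (P i ∩ (v g) '' P j)).toReal - (μ (Q i ∩ (w g) '' Q j)).toReal| < ε := by
  classical
  have hS : ApproximableOn μ v W S := fun ε hε n P hP => by
    obtain ⟨w, hw, Q, hQm, hQd, hQc, hclose⟩ := hyp ε hε n P hP.1 hP.2 hP.3
    exact ⟨w, hw, Q, ⟨hQm, hQd, hQc⟩, hclose⟩
  set S₁ : Set G := insert 1 S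
  have hS₁_inv : S₁⁻¹ = S₁ := by
    ext g
    simpa [S₁] using or_congr_right ⟨fun h => by simpa using hSsym _ h, hSsym g⟩
  have happrox (L : ℕ) : ApproximableOn μ v W (S₁ ^ (L + 1)) := by
    induction L with
    | zero =>
      simpa using hS.insert_one (fun g => (hv g).measurable) (fun w hw g => (hW w hw g).measurable)
    | succ L ih =>
      have := ih.inv_mul hv hW (S := insert 1 S)
        (by simpa using subset_pow (mem_insert 1 _) L.succ_ne_zero)
      rwa [Finset.coe_insert, hS₁_inv, ← pow_succ'] at this
  choose len hlen using fun g =>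
    exists_mem_insert_one_pow_of_mem_closure hSsym ((Subgroup.eq_top_iff' _).mp hSgen g)
  intro ε hε n P hPm hPd hPc F
  obtain ⟨w, hw, Q, hQ, hclose⟩ := happrox (F.sup len) ε hε n P ⟨hPm, hPd, hPc⟩
  exact ⟨w, hw, Q, hQ.1, hQ.2, hQ.3, fun g hg => hclose g <|
    pow_subset_pow_right (mem_insert 1 _) ((Finset.le_sup hg).trans (Nat.le_succ _)) (hlen g)⟩
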